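/- Let 0 < α < 2 and r > 0, and let v be a lower semi-continuous function on the closure of a bounded open set Ω ⊂ ℝⁿ, with v ≥ 0 on ℝⁿ \ Ω and (−Δ)^(α/2) v ≥ 0 in Ω (in the viscosity/distributional sense). If both v and −v satisfy these hypotheses (i.e. v is continuous, (−Δ)^(α/2) v = 0 in Ω, and v = 0 outside Ω), then v ≡ 0 on ℝⁿ. -/

import Mathlib

/-! At a positive global maximum `x₀` of a compactly supported `v`, every truncated integral
defining `(-Δ)^(α/2) v (x₀)` has a nonnegative integrand, and so is at least the integral over
the complement of a ball containing the support, where the integrand is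
`v x₀ / dist x₀ y ^ (n + α) > 0`. Hence `(-Δ)^(α/2) v (x₀) > 0`, so a function with
`(-Δ)^(α/2) v ≤ 0` wherever `v > 0` is `≤ 0`. Applied to `v` and `-v`, this forces an
`α`-harmonic function vanishing outside a bounded set to vanish identically. -/

/-- `v` has fractional Laplacian `(-Δ)^(α/2) v (x) = L` at `x`, defined as the
principal-value limit of the singular integral. -/
def hasFracLapAt (n : ℕ) (α : ℝ) (v : EuclideanSpace ℝ (Fin n) → ℝ)
    (x : EuclideanSpace ℝ (Fin n)) (L : ℝ) : Prop :=
  Filter.Tendsto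
    (fun ε : ℝ => ∫ y in {y : EuclideanSpace ℝ (Fin n) | ε < dist x y},
      (v x - v y) / dist x y ^ ((n : ℝ) + α))
    (nhdsWithin 0 (Set.Ioi 0)) (nhds L)

open MeasureTheory Filter Set Metric Bornology Module

lemma Real.rpow_neg_le_mul_one_add_rpow_neg {ε d p : ℝ} (hε : 0 < ε) (hεd : ε < d)
    (hp : 0 ≤ p) :
    d ^ (-p) ≤ (1 + ε⁻¹) ^ p * (1 + d) ^ (-p) := by
  have hd : 0 < d := hε.trans hεd
  have hc : 0 < 1 + ε⁻¹ := by positivity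
  have hle : 1 + d ≤ (1 + ε⁻¹) * d := by
    have : 1 ≤ ε⁻¹ * d := by rw [inv_mul_eq_div, le_div_iff₀ hε]; linarith
    linarith
  calc d ^ (-p) = (1 + ε⁻¹) ^ p * ((1 + ε⁻¹) * d) ^ (-p) := by
        rw [Real.mul_rpow hc.le hd.le, Real.rpow_neg hc.le, mul_inv_cancel_left₀ (by positivity)]
    _ ≤ (1 + ε⁻¹) ^ p * (1 + d) ^ (-p) :=
        mul_le_mul_of_nonneg_left (Real.rpow_le_rpow_of_nonpos (by positivity) hle (by linarith))
          (by positivity)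

theorem integrableOn_div_dist_rpow {E : Type*} [NormedAddCommGroup E] [NormedSpace ℝ E]
    [FiniteDimensional ℝ E] [MeasurableSpace E] [BorelSpace E] {μ : Measure E}
    [μ.IsAddHaarMeasure] {u : E → ℝ} {C p ε : ℝ} (hu : AEStronglyMeasurable u μ)
    (hC : ∀ y, |u y| ≤ C) (hp : (finrank ℝ E : ℝ) < p) (hε : 0 < ε) (x : E) :
    IntegrableOn (fun y => u y / dist x y ^ p) {y | ε < dist x y} μ := by
  have hp0 : 0 ≤ p := (Nat.cast_nonneg _).trans hp.le
  have hg : Integrable (fun y => C * ((1 + ε⁻¹) ^ p * (1 + ‖y - x‖) ^ (-p))) μ :=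
    (((integrable_one_add_norm hp).comp_sub_right x).const_mul _).const_mul _
  have hden : Measurable fun y => dist x y ^ p := (measurable_const.dist measurable_id).pow_const _
  refine hg.integrableOn.mono'
    (hu.aemeasurable.div hden.aemeasurable).aestronglyMeasurable.restrict ?_
  refine (ae_restrict_iff' (measurableSet_lt measurable_const
    (measurable_const.dist measurable_id))).2 (ae_of_all _ fun y (hy : ε < dist x y) => ?_)
  have hd : 0 < dist x y := hε.trans hy
  rw [Real.norm_eq_abs, abs_div, abs_of_pos (Real.rpow_pos_of_pos hd p), div_eq_mul_inv,
    ← Real.rpow_neg hd.le, ← dist_eq_norm, dist_comm y x]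
  exact mul_le_mul (hC y) (Real.rpow_neg_le_mul_one_add_rpow_neg hε hy hp0) (by positivity)
    ((abs_nonneg _).trans (hC y))

namespace hasFracLapAt

variable {n : ℕ} {α L : ℝ} {v : EuclideanSpace ℝ (Fin n) → ℝ}
  {x : EuclideanSpace ℝ (Fin n)}

theorem neg (h : hasFracLapAt n α v x L) : hasFracLapAt n α (-v) x (-L) := by
  unfold hasFracLapAt at h ⊢
  convert h.neg using 2 with ε
  rw [← integral_neg]
  congr 1 with y
  simp only [Pi.neg_apply]
  ring

theorem setIntegral_le (h : hasFracLapAt n α v x L) (hmax : ∀ y, v y ≤ v x)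
    (hint : ∀ ε > 0, IntegrableOn (fun y => (v x - v y) / dist x y ^ ((n : ℝ) + α))
      {y | ε < dist x y})
    {ε₀ : ℝ} (hε₀ : 0 < ε₀) :
    ∫ y in {y | ε₀ < dist x y}, (v x - v y) / dist x y ^ ((n : ℝ) + α) ≤ L := by
  refine ge_of_tendsto h ?_
  filter_upwards [Ioo_mem_nhdsGT hε₀] with ε hε
  exact setIntegral_mono_set (hint ε hε.1)
    (ae_of_all _ fun y => div_nonneg (sub_nonneg.2 (hmax y)) (by positivity))
    (show {y | ε₀ < dist x y} ⊆ {y | ε < dist x y} from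
      fun _ hy => hε.2.trans hy).eventuallyLE

theorem pos_of_forall_le (h : hasFracLapAt n α v x L) (hα : 0 < α) (hn : 1 ≤ n)
    (hv : Continuous v) (hsupp : HasCompactSupport v) (hmax : ∀ y, v y ≤ v x)
    (hpos : 0 < v x) : 0 < L := by
  obtain ⟨C, hC⟩ := hv.bounded_above_of_compact_support hsupp
  have hp : (finrank ℝ (EuclideanSpace ℝ (Fin n)) : ℝ) < n + α := by
    rw [finrank_euclideanSpace_fin]; linarith
  have hint : ∀ ε > 0, IntegrableOn (fun y => (v x - v y) / dist x y ^ ((n : ℝ) + α))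
      {y | ε < dist x y} := fun ε hε =>
    integrableOn_div_dist_rpow (C := C + C) (continuous_const.sub hv).aestronglyMeasurable
      (fun y => (abs_sub _ _).trans (add_le_add (hC x) (hC y))) hp hε x
  obtain ⟨R, hR0, hR⟩ := hsupp.isCompact.isBounded.subset_closedBall_lt 0 x
  have hvanish : ∀ y, R < dist x y → v y = 0 := fun y hy =>
    image_eq_zero_of_notMem_tsupport fun hy' =>
      (mem_closedBall.1 (hR hy')).not_gt (by rwa [dist_comm])
  have : Nontrivial (EuclideanSpace ℝ (Fin n)) :=
    have : Nonempty (Fin n) := ⟨⟨0, hn⟩⟩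
    inferInstance
  obtain ⟨w, hw⟩ := NormedSpace.exists_lt_norm ℝ (EuclideanSpace ℝ (Fin n)) R
  have hS : 0 < volume {y | R < dist x y} :=
    (isOpen_lt continuous_const (continuous_const.dist continuous_id)).measure_pos volume
      ⟨x + w, show R < dist x (x + w) by rwa [dist_self_add_right]⟩
  refine lt_of_lt_of_le ?_ (h.setIntegral_le hmax hint hR0)
  rw [setIntegral_pos_iff_support_of_nonneg_ae
    (ae_of_all _ fun y => div_nonneg (sub_nonneg.2 (hmax y)) (by positivity)) (hint R hR0)]
  refine hS.trans_le (measure_mono fun y (hy : R < dist x y) => ⟨?_, hy⟩)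
  rw [Function.mem_support, hvanish y hy, sub_zero]
  exact (div_pos hpos (Real.rpow_pos_of_pos (hR0.trans hy) _)).ne'

end hasFracLapAt

theorem nonpos_of_hasFracLapAt_nonpos {n : ℕ} {α : ℝ} {v : EuclideanSpace ℝ (Fin n) → ℝ}
    (hα : 0 < α) (hn : 1 ≤ n) (hv : Continuous v) (hsupp : HasCompactSupport v)
    (hsub : ∀ x, 0 < v x → ∃ L ≤ 0, hasFracLapAt n α v x L)
    (x : EuclideanSpace ℝ (Fin n)) :
    v x ≤ 0 := by
  by_contra! hx
  obtain ⟨x₀, hmax⟩ := hv.exists_forall_ge_of_hasCompactSupport hsupp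
  have hx₀ : 0 < v x₀ := hx.trans_le (hmax x)
  obtain ⟨L, hL, h⟩ := hsub x₀ hx₀
  exact hL.not_gt (h.pos_of_forall_le hα hn hv hsupp hmax hx₀)

theorem stmt_17_general (α : ℝ) (hα0 : 0 < α) (n : ℕ) (hn : 1 ≤ n)
    (Ω : Set (EuclideanSpace ℝ (Fin n))) (hΩb : Bornology.IsBounded Ω)
    (v : EuclideanSpace ℝ (Fin n) → ℝ) (hc : Continuous v)
    (hout : ∀ x ∉ Ω, v x = 0)
    (hharm : ∀ x ∈ Ω, hasFracLapAt n α v x 0) :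
    ∀ x, v x = 0 := by
  have hsupp : HasCompactSupport v :=
    HasCompactSupport.intro hΩb.isCompact_closure fun x hx =>
      hout x fun h => hx (subset_closure h)
  have hmem : ∀ x, v x ≠ 0 → x ∈ Ω := fun x hx => by_contra fun h => hx (hout x h)
  intro x
  have hle := nonpos_of_hasFracLapAt_nonpos hα0 hn hc hsupp
    (fun y hy => ⟨0, le_rfl, hharm y (hmem y hy.ne')⟩) x
  have hge := nonpos_of_hasFracLapAt_nonpos hα0 hn hc.neg hsupp.neg
    (fun y hy => ⟨0, le_rfl, by simpa using (hharm y (hmem y (by simpa using hy.ne'))).neg⟩) x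
  simp only [Pi.neg_apply, neg_nonpos] at hge
  exact le_antisymm hle hge

theorem stmt_17 (α : ℝ) (hα0 : 0 < α) (hα2 : α < 2) (n : ℕ) (hn : 1 ≤ n)
    (Ω : Set (EuclideanSpace ℝ (Fin n))) (hΩo : IsOpen Ω) (hΩb : Bornology.IsBounded Ω)
    (v : EuclideanSpace ℝ (Fin n) → ℝ) (hc : Continuous v)
    (hout : ∀ x ∉ Ω, v x = 0)
    (hharm : ∀ x ∈ Ω, hasFracLapAt n α v x 0) :
    ∀ x, v x = 0 :=
  stmt_17_general α hα0 n hn Ω hΩb v hc hout hharm
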